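/- Let q : ℝ → ℝ be measurable with ∫₀^∞ (1+x)|q(x)| dx < ∞, let λ₁ > 0, let f be a Jost solution for q, and suppose g(z,x), defined for z ∈ ℂ with Im z ≥ 0, z ≠ 0, and x ∈ [0,∞), satisfies g(z,x) = i z^{1/2} e^{i z^{1/2} x} − ∫_x^∞ cos(z^{1/2}(x − x')) q(x') f(z,x') dx' for all x ≥ 0 (the x-derivative of the Jost solution). Then, using the principal square root, g(z − λ₁, 0) − i z^{1/2} + (1/2) ∫₀^∞ (e^{2i(z−λ₁)^{1/2} x} + 1) q(x) dx = O(|z|^{−1/2}) as |z| → ∞ with z ranging over the closed upper half-plane {z ∈ ℂ | Im z ≥ 0}. -/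

import Mathlib

open MeasureTheory Complex Filter Asymptotics

/-- `f` is a Jost solution for the potential `q`: for each `z` in the closed upper half-plane
with `z ≠ 0`, the map `x ↦ e^{-i√z x} f(z,x)` is (a.e. strongly) measurable and bounded on
`[0,∞)`, and `f(z,·)` satisfies the Volterra integral equation (14.4.7). Here `z ^ (1/2 : ℂ)`
is the principal square root. -/
def IsJost (q : ℝ → ℝ) (f : ℂ → ℝ → ℂ) : Prop :=
  ∀ z : ℂ, 0 ≤ z.im → z ≠ 0 →
    AEStronglyMeasurable
      (fun x : ℝ => Complex.exp (-Complex.I * z ^ (1 / 2 : ℂ) * x) * f z x)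
      (volume.restrict (Set.Ici 0)) ∧
    (∃ M : ℝ, ∀ x : ℝ, 0 ≤ x →
      ‖Complex.exp (-Complex.I * z ^ (1 / 2 : ℂ) * x) * f z x‖ ≤ M) ∧
    ∀ x : ℝ, 0 ≤ x →
      f z x = Complex.exp (Complex.I * z ^ (1 / 2 : ℂ) * x)
        - ∫ t in Set.Ioi x, (z ^ (1 / 2 : ℂ))⁻¹
            * Complex.sin (z ^ (1 / 2 : ℂ) * ((x : ℂ) - (t : ℂ))) * (q t : ℂ) * f z t

/-!
Put `m(z, x) = e^{-i√z x} f(z, x)` (`jostReduced f z x`). The Volterra equation becomes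
`m(x) - 1 = ∫_x^∞ (√z)⁻¹ sin(√z (t - x)) e^{i√z (t - x)} q(t) m(t) dt`, whose kernel is bounded by
`|q(t)| / |√z|` in the closed upper half-plane; bootstrapping on `sup |m - 1|` gives
`|m - 1| ≤ 2‖q‖₁ / |√z|` as soon as `|√z| ≥ 2‖q‖₁`. Since `cos u · e^{iu} = (e^{2iu} + 1) / 2`,
`g(w, 0) = i√w - ½ ∫ (e^{2i√w t} + 1) q - ∫ cos(√w t) e^{i√w t} q (m - 1)`, and the last integral
is `O(|w|^{-1/2})`. It remains to replace `i√(z - λ₁)` by `i√z`, at a cost of `|λ₁| / |√z|`.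
-/

open Set

namespace Complex

lemma re_cpow_half_nonneg (z : ℂ) : 0 ≤ (z ^ (1 / 2 : ℂ)).re := by
  rw [one_div, cpow_inv_two_re]
  exact Real.sqrt_nonneg _

lemma im_cpow_half_nonneg {z : ℂ} (hz : 0 ≤ z.im) : 0 ≤ (z ^ (1 / 2 : ℂ)).im := by
  rw [one_div, cpow_inv_two_im_eq_sqrt hz]
  exact Real.sqrt_nonneg _

lemma norm_cpow_half (z : ℂ) : ‖z ^ (1 / 2 : ℂ)‖ = √‖z‖ := by
  rw [Real.sqrt_eq_rpow, ← norm_cpow_real]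
  norm_num

lemma cpow_half_mul_self (z : ℂ) : z ^ (1 / 2 : ℂ) * z ^ (1 / 2 : ℂ) = z := by
  rw [← sq, one_div, cpow_ofNat_inv_pow]

lemma norm_le_norm_add_of_re_im_nonneg {a b : ℂ} (ha : 0 ≤ a.re) (ha' : 0 ≤ a.im)
    (hb : 0 ≤ b.re) (hb' : 0 ≤ b.im) : ‖b‖ ≤ ‖a + b‖ := by
  rw [← sq_le_sq₀ (norm_nonneg _) (norm_nonneg _), Complex.sq_norm, Complex.sq_norm, normSq_apply,
    normSq_apply, add_re, add_im]
  nlinarith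

/-- Both square roots lie in the closed first quadrant, so `‖√z‖ ≤ ‖√w + √z‖`, and
`(√w - √z)(√w + √z) = w - z`. -/
lemma norm_cpow_half_sub_mul_le {z w : ℂ} (hz : 0 ≤ z.im) (hw : 0 ≤ w.im) :
    ‖w ^ (1 / 2 : ℂ) - z ^ (1 / 2 : ℂ)‖ * ‖z ^ (1 / 2 : ℂ)‖ ≤ ‖w - z‖ := calc
  _ ≤ ‖w ^ (1 / 2 : ℂ) - z ^ (1 / 2 : ℂ)‖ * ‖w ^ (1 / 2 : ℂ) + z ^ (1 / 2 : ℂ)‖ := by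
    gcongr
    exact norm_le_norm_add_of_re_im_nonneg (re_cpow_half_nonneg w) (im_cpow_half_nonneg hw)
      (re_cpow_half_nonneg z) (im_cpow_half_nonneg hz)
  _ = ‖w - z‖ := by
    rw [← norm_mul]
    congr 1
    linear_combination cpow_half_mul_self w - cpow_half_mul_self z

lemma norm_cpow_half_sub_le {z c : ℂ} (hz : 0 ≤ z.im) (hz₀ : z ≠ 0) (hzc : 0 ≤ (z - c).im) :
    ‖(z - c) ^ (1 / 2 : ℂ) - z ^ (1 / 2 : ℂ)‖ ≤ ‖c‖ / √‖z‖ := by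
  rw [le_div_iff₀ (Real.sqrt_pos.2 (norm_pos_iff.2 hz₀)), ← norm_cpow_half]
  simpa using norm_cpow_half_sub_mul_le hz hzc

lemma sqrt_norm_le_two_mul_norm_cpow_half_sub {z c : ℂ} (h : 2 * ‖c‖ ≤ ‖z‖) :
    √‖z‖ ≤ 2 * ‖(z - c) ^ (1 / 2 : ℂ)‖ := by
  rw [Real.sqrt_le_left (by positivity), mul_pow, norm_cpow_half,
    Real.sq_sqrt (norm_nonneg _)]
  linarith [norm_sub_norm_le z c, norm_nonneg z]

lemma norm_exp_two_mul_I_mul_le_one {u : ℂ} (hu : 0 ≤ u.im) : ‖exp (2 * I * u)‖ ≤ 1 := by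
  simpa [norm_exp] using hu

lemma norm_exp_two_mul_I_mul_add_one_le {u : ℂ} (hu : 0 ≤ u.im) :
    ‖exp (2 * I * u) + 1‖ ≤ 2 := by
  linarith [norm_add_le (exp (2 * I * u)) 1, norm_one (α := ℂ), norm_exp_two_mul_I_mul_le_one hu]

lemma cos_mul_exp_I_mul (u : ℂ) : cos u * exp (I * u) = (exp (2 * I * u) + 1) / 2 := by
  rw [cos, div_mul_eq_mul_div, add_mul, ← exp_add, ← exp_add, ← exp_zero]
  ring_nf

lemma sin_mul_exp_I_mul (u : ℂ) : sin u * exp (I * u) = (1 - exp (2 * I * u)) * I / 2 := by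
  rw [sin, div_mul_eq_mul_div, mul_right_comm, sub_mul, ← exp_add, ← exp_add, ← exp_zero]
  ring_nf

lemma norm_cos_mul_exp_I_mul_le_one {u : ℂ} (hu : 0 ≤ u.im) : ‖cos u * exp (I * u)‖ ≤ 1 := by
  rw [cos_mul_exp_I_mul, norm_div, RCLike.norm_ofNat]
  linarith [norm_exp_two_mul_I_mul_add_one_le hu]

lemma norm_sin_mul_exp_I_mul_le_one {u : ℂ} (hu : 0 ≤ u.im) : ‖sin u * exp (I * u)‖ ≤ 1 := by
  rw [sin_mul_exp_I_mul, norm_div, norm_mul, norm_I, mul_one, RCLike.norm_ofNat]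
  linarith [norm_sub_le (1 : ℂ) (exp (2 * I * u)), norm_one (α := ℂ),
    norm_exp_two_mul_I_mul_le_one hu]

end Complex

lemma le_two_mul_of_forall_le_mul_one_add {ι : Type*} [Nonempty ι] {h : ι → ℝ}
    (hbdd : BddAbove (range h)) {a : ℝ} (ha₀ : 0 ≤ a) (ha : a ≤ 1 / 2)
    (hh : ∀ C, (∀ j, h j ≤ C) → ∀ i, h i ≤ a * (1 + C)) (i : ι) : h i ≤ 2 * a := by
  have hle : ∀ j, h j ≤ ⨆ j, h j := le_ciSup hbdd
  have hsup : ⨆ j, h j ≤ a * (1 + ⨆ j, h j) := ciSup_le (hh _ hle)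
  refine (hle i).trans ?_
  rcases le_or_gt 0 (⨆ j, h j) with hS | hS <;> nlinarith

section Volterra

variable {q : ℝ → ℝ} {k : ℂ} {m : ℝ → ℂ}

lemma norm_sub_one_le_of_volterra (hq : IntegrableOn (fun t => |q t|) (Ioi 0)) (hk : 0 ≤ k.im)
    (hm : ∀ x, 0 ≤ x → m x - 1 = ∫ t in Ioi x,
      k⁻¹ * (sin (k * (t - x)) * exp (I * (k * (t - x)))) * q t * m t)
    {C : ℝ} (hC : ∀ t, 0 ≤ t → ‖m t - 1‖ ≤ C) {x : ℝ} (hx : 0 ≤ x) :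
    ‖m x - 1‖ ≤ (∫ t in Ioi 0, |q t|) / ‖k‖ * (1 + C) := by
  have hC₀ : 0 ≤ 1 + C := by linarith [hC 0 le_rfl, norm_nonneg (m 0 - 1)]
  have hkernel : ∀ t, x ≤ t →
      ‖k⁻¹ * (sin (k * (t - x)) * exp (I * (k * (t - x)))) * q t * m t‖
        ≤ |q t| * ((1 + C) / ‖k‖) := by
    intro t ht
    have him : 0 ≤ (k * (t - x)).im := by
      simpa [mul_im] using mul_nonneg hk (sub_nonneg.2 ht)
    have hmt : ‖m t‖ ≤ 1 + C := by
      linarith [norm_le_norm_sub_add (m t) 1, hC t (hx.trans ht), norm_one (α := ℂ)]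
    rw [norm_mul, norm_mul, norm_mul, norm_inv, norm_real, Real.norm_eq_abs, div_eq_inv_mul]
    calc ‖k‖⁻¹ * ‖sin (k * (t - x)) * exp (I * (k * (t - x)))‖ * |q t| * ‖m t‖
        ≤ ‖k‖⁻¹ * 1 * |q t| * (1 + C) := by
          gcongr
          exact norm_sin_mul_exp_I_mul_le_one him
      _ = |q t| * (‖k‖⁻¹ * (1 + C)) := by ring
  calc ‖m x - 1‖ ≤ ∫ t in Ioi x, |q t| * ((1 + C) / ‖k‖) := by
        rw [hm x hx]
        refine norm_integral_le_of_norm_le ((hq.mono_set (Ioi_subset_Ioi hx)).mul_const _) ?_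
        filter_upwards [ae_restrict_mem measurableSet_Ioi] with t ht
        exact hkernel t (le_of_lt ht)
    _ ≤ (∫ t in Ioi 0, |q t|) * ((1 + C) / ‖k‖) := by
        rw [integral_mul_const]
        gcongr ?_ * _
        exact setIntegral_mono_set hq (Eventually.of_forall fun t => abs_nonneg _)
          (Eventually.of_forall (Ioi_subset_Ioi hx))
    _ = _ := by ring

end Volterra

noncomputable def jostReduced (f : ℂ → ℝ → ℂ) (z : ℂ) (x : ℝ) : ℂ :=
  exp (-I * z ^ (1 / 2 : ℂ) * x) * f z x

lemma eq_exp_mul_jostReduced (f : ℂ → ℝ → ℂ) (z : ℂ) (x : ℝ) :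
    f z x = exp (I * z ^ (1 / 2 : ℂ) * x) * jostReduced f z x := by
  rw [jostReduced, ← mul_assoc, ← exp_add, neg_mul, neg_mul, add_neg_cancel, exp_zero, one_mul]

namespace IsJost

variable {q : ℝ → ℝ} {f : ℂ → ℝ → ℂ} {z : ℂ}

lemma jostReduced_sub_one_eq (hf : IsJost q f) (hz : 0 ≤ z.im) (hz₀ : z ≠ 0) {x : ℝ}
    (hx : 0 ≤ x) :
    jostReduced f z x - 1 = ∫ t in Ioi x, (z ^ (1 / 2 : ℂ))⁻¹
      * (sin (z ^ (1 / 2 : ℂ) * (t - x)) * exp (I * (z ^ (1 / 2 : ℂ) * (t - x))))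
      * q t * jostReduced f z t := by
  have hx' : jostReduced f z x - 1
      = -exp (-I * z ^ (1 / 2 : ℂ) * x) * (exp (I * z ^ (1 / 2 : ℂ) * x) - f z x) := by
    have h : exp (-I * z ^ (1 / 2 : ℂ) * x) * exp (I * z ^ (1 / 2 : ℂ) * x) = 1 := by
      rw [← exp_add, neg_mul, neg_mul, neg_add_cancel, exp_zero]
    rw [jostReduced]
    linear_combination h
  rw [hx', (hf z hz hz₀).2.2 x hx, sub_sub_cancel, ← integral_const_mul]
  refine integral_congr_ae (Eventually.of_forall fun t => ?_)
  dsimp only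
  rw [eq_exp_mul_jostReduced f z t, show z ^ (1 / 2 : ℂ) * (x - t) = -(z ^ (1 / 2 : ℂ) * (t - x))
    by ring, sin_neg, show I * (z ^ (1 / 2 : ℂ) * (t - x))
      = I * z ^ (1 / 2 : ℂ) * t + -I * z ^ (1 / 2 : ℂ) * x by ring, exp_add]
  ring

lemma norm_jostReduced_sub_one_le (hq : IntegrableOn (fun t => |q t|) (Ioi 0))
    (hf : IsJost q f) (hz : 0 ≤ z.im) (hz₀ : z ≠ 0)
    (hQ : 2 * ∫ t in Ioi 0, |q t| ≤ ‖z ^ (1 / 2 : ℂ)‖) {x : ℝ} (hx : 0 ≤ x) :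
    ‖jostReduced f z x - 1‖ ≤ 2 * (∫ t in Ioi 0, |q t|) / ‖z ^ (1 / 2 : ℂ)‖ := by
  obtain ⟨-, ⟨M, hM⟩, -⟩ := hf z hz hz₀
  have hk : 0 < ‖z ^ (1 / 2 : ℂ)‖ := by
    rw [norm_cpow_half]
    exact Real.sqrt_pos.2 (norm_pos_iff.2 hz₀)
  have hQ₀ : 0 ≤ ∫ t in Ioi 0, |q t| := integral_nonneg fun t => abs_nonneg _
  rw [mul_div_assoc]
  refine le_two_mul_of_forall_le_mul_one_add (ι := Ici (0 : ℝ))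
    (h := fun t => ‖jostReduced f z t - 1‖) ?_ (by positivity) ?_ ?_ ⟨x, hx⟩
  · refine ⟨M + 1, ?_⟩
    rintro _ ⟨⟨t, ht⟩, rfl⟩
    have hMt : ‖jostReduced f z t‖ ≤ M := hM t ht
    linarith [norm_sub_le (jostReduced f z t) 1, norm_one (α := ℂ)]
  · rw [div_le_iff₀ hk]
    linarith
  · intro C hC t
    exact norm_sub_one_le_of_volterra hq (im_cpow_half_nonneg hz)
      (fun y hy => hf.jostReduced_sub_one_eq hz hz₀ hy) (fun s hs => hC ⟨s, hs⟩) t.2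

lemma norm_integral_cos_mul_sub_le (hq_meas : Measurable q)
    (hq : IntegrableOn (fun t => |q t|) (Ioi 0)) (hf : IsJost q f) (hz : 0 ≤ z.im) (hz₀ : z ≠ 0)
    (hQ : 2 * ∫ t in Ioi 0, |q t| ≤ ‖z ^ (1 / 2 : ℂ)‖) :
    ‖(∫ t in Ioi (0 : ℝ), cos (z ^ (1 / 2 : ℂ) * t) * q t * f z t)
        - 1 / 2 * ∫ t in Ioi (0 : ℝ), (exp (2 * I * z ^ (1 / 2 : ℂ) * t) + 1) * q t‖
      ≤ 2 * (∫ t in Ioi 0, |q t|) ^ 2 / ‖z ^ (1 / 2 : ℂ)‖ := by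
  set k := z ^ (1 / 2 : ℂ)
  set Q := ∫ t in Ioi 0, |q t|
  have hkt : ∀ t : ℝ, 0 ≤ t → 0 ≤ (k * t).im := fun t ht => by
    rw [mul_im, ofReal_re, ofReal_im, mul_zero, zero_add]
    exact mul_nonneg (im_cpow_half_nonneg hz) ht
  set A : ℝ → ℂ := fun t => cos (k * t) * exp (I * k * t) * q t * (jostReduced f z t - 1)
  set B : ℝ → ℂ := fun t => (exp (2 * I * k * t) + 1) * q t
  have hsplit : ∀ t : ℝ, cos (k * t) * q t * f z t = A t + 1 / 2 * B t := fun t => by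
    have h : cos (k * t) * exp (I * k * t) = (exp (2 * I * k * t) + 1) / 2 := by
      rw [mul_assoc I k, mul_assoc (2 * I) k]
      exact cos_mul_exp_I_mul _
    have hft : f z t = exp (I * k * t) * jostReduced f z t := eq_exp_mul_jostReduced f z t
    rw [hft]
    linear_combination (q t : ℂ) * h
  have hqC : AEStronglyMeasurable (fun t : ℝ => (q t : ℂ)) (volume.restrict (Ioi 0)) :=
    (measurable_ofReal.comp hq_meas).aestronglyMeasurable
  have hA_le : ∀ᵐ t ∂(volume.restrict (Ioi 0)), ‖A t‖ ≤ 2 * Q / ‖k‖ * |q t| := by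
    filter_upwards [ae_restrict_mem measurableSet_Ioi] with t ht
    simp only [A, norm_mul, norm_real, Real.norm_eq_abs]
    calc ‖cos (k * t)‖ * ‖exp (I * k * t)‖ * |q t| * ‖jostReduced f z t - 1‖
        = ‖cos (k * t) * exp (I * k * t)‖ * ‖jostReduced f z t - 1‖ * |q t| := by
          rw [norm_mul]; ring
      _ ≤ 1 * (2 * Q / ‖k‖) * |q t| := by
          gcongr
          · simpa only [mul_assoc] using norm_cos_mul_exp_I_mul_le_one (hkt t ht.le)
          · exact hf.norm_jostReduced_sub_one_le hq hz hz₀ hQ ht.le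
      _ = 2 * Q / ‖k‖ * |q t| := by rw [one_mul]
  have hA : Integrable A (volume.restrict (Ioi 0)) := by
    refine (hq.const_mul _).mono' ?_ hA_le
    have hm := (hf z hz hz₀).1.mono_measure (Measure.restrict_mono Ioi_subset_Ici_self le_rfl)
    exact ((Continuous.aestronglyMeasurable (by fun_prop)).mul hqC).mul
      (hm.sub aestronglyMeasurable_const)
  have hB : Integrable B (volume.restrict (Ioi 0)) := by
    refine (hq.const_mul 2).mono' ((Continuous.aestronglyMeasurable (by fun_prop)).mul hqC) ?_
    filter_upwards [ae_restrict_mem measurableSet_Ioi] with t ht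
    rw [norm_mul, norm_real, Real.norm_eq_abs, mul_assoc]
    gcongr
    simpa [mul_assoc] using norm_exp_two_mul_I_mul_add_one_le (hkt t ht.le)
  have hint : (∫ t in Ioi (0 : ℝ), cos (k * t) * q t * f z t) - 1 / 2 * ∫ t in Ioi (0 : ℝ), B t
      = ∫ t in Ioi (0 : ℝ), A t := by
    simp_rw [hsplit]
    rw [integral_add hA (hB.const_mul _), integral_const_mul]
    ring
  rw [hint]
  calc ‖∫ t in Ioi (0 : ℝ), A t‖ ≤ ∫ t in Ioi (0 : ℝ), 2 * Q / ‖k‖ * |q t| :=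
        norm_integral_le_of_norm_le (hq.const_mul _) hA_le
    _ = 2 * Q ^ 2 / ‖k‖ := by rw [integral_const_mul]; ring

lemma norm_jostDeriv_shift_remainder_le (hq_meas : Measurable q)
    (hq : IntegrableOn (fun t => |q t|) (Ioi 0)) (hf : IsJost q f) {g : ℂ → ℝ → ℂ}
    (hg : ∀ w : ℂ, 0 ≤ w.im → w ≠ 0 →
      g w 0 = I * w ^ (1 / 2 : ℂ) - ∫ t in Ioi (0 : ℝ), cos (w ^ (1 / 2 : ℂ) * t) * q t * f w t)
    {c : ℝ} (hz : 0 ≤ z.im) (hzc : 2 * |c| + 16 * (∫ t in Ioi 0, |q t|) ^ 2 < ‖z‖) :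
    ‖g (z - c) 0 - I * z ^ (1 / 2 : ℂ)
        + 1 / 2 * ∫ t in Ioi (0 : ℝ), (exp (2 * I * (z - c) ^ (1 / 2 : ℂ) * t) + 1) * q t‖
      ≤ (|c| + 4 * (∫ t in Ioi 0, |q t|) ^ 2) / √‖z‖ := by
  set Q := ∫ t in Ioi 0, |q t|
  set w := z - c
  have hc := abs_nonneg c
  have hQ₂ := sq_nonneg Q
  have hz₀ : z ≠ 0 := norm_pos_iff.1 (by linarith)
  have hw : 0 ≤ w.im := by simpa [w] using hz
  have hk : √‖z‖ ≤ 2 * ‖w ^ (1 / 2 : ℂ)‖ :=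
    sqrt_norm_le_two_mul_norm_cpow_half_sub (by rw [norm_real, Real.norm_eq_abs]; linarith)
  have hQ : 2 * Q ≤ ‖w ^ (1 / 2 : ℂ)‖ := by
    linarith [Real.le_sqrt_of_sq_le (show (4 * Q) ^ 2 ≤ ‖z‖ by linarith)]
  have hw₀ : w ≠ 0 := by
    intro hw₀
    rw [hw₀, zero_cpow (by norm_num), norm_zero] at hk
    linarith [Real.sqrt_pos.2 (norm_pos_iff.2 hz₀)]
  rw [hg w hw hw₀]
  calc _ = ‖I * (w ^ (1 / 2 : ℂ) - z ^ (1 / 2 : ℂ))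
          - ((∫ t in Ioi (0 : ℝ), cos (w ^ (1 / 2 : ℂ) * t) * q t * f w t)
            - 1 / 2 * ∫ t in Ioi (0 : ℝ), (exp (2 * I * w ^ (1 / 2 : ℂ) * t) + 1) * q t)‖ := by
        congr 1
        ring
    _ ≤ ‖c‖ / √‖z‖ + 2 * Q ^ 2 / ‖w ^ (1 / 2 : ℂ)‖ := by
        refine (norm_sub_le _ _).trans
          (add_le_add ?_ (hf.norm_integral_cos_mul_sub_le hq_meas hq hw hw₀ hQ))
        rw [norm_mul, norm_I, one_mul, ← norm_real]
        exact norm_cpow_half_sub_le hz hz₀ hw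
    _ ≤ |c| / √‖z‖ + 4 * Q ^ 2 / √‖z‖ := by
        rw [Real.norm_eq_abs, show 2 * Q ^ 2 / ‖w ^ (1 / 2 : ℂ)‖
          = 4 * Q ^ 2 / (2 * ‖w ^ (1 / 2 : ℂ)‖) by field_simp; ring]
        gcongr
    _ = (|c| + 4 * Q ^ 2) / √‖z‖ := by ring

end IsJost

theorem statement19_general (q : ℝ → ℝ) (hq_meas : Measurable q)
    (hq : IntegrableOn (fun x => (1 + x) * |q x|) (Set.Ioi 0))
    (lam₁ : ℝ) (f g : ℂ → ℝ → ℂ) (hf : IsJost q f)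
    (hg : ∀ z : ℂ, 0 ≤ z.im → z ≠ 0 → ∀ x : ℝ, 0 ≤ x →
      g z x = Complex.I * z ^ (1 / 2 : ℂ) * Complex.exp (Complex.I * z ^ (1 / 2 : ℂ) * x)
        - ∫ t in Set.Ioi x,
            Complex.cos (z ^ (1 / 2 : ℂ) * ((x : ℂ) - (t : ℂ))) * (q t : ℂ) * f z t) :
    (fun z : ℂ => g (z - (lam₁ : ℂ)) 0 - Complex.I * z ^ (1 / 2 : ℂ)
        + (1 / 2 : ℂ)
          * ∫ x in Set.Ioi (0 : ℝ),
              (Complex.exp (2 * Complex.I * (z - (lam₁ : ℂ)) ^ (1 / 2 : ℂ) * x) + 1) * (q x : ℂ))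
      =O[comap (fun z : ℂ => ‖z‖) atTop ⊓ 𝓟 {z : ℂ | 0 ≤ z.im}]
      (fun z : ℂ => ‖z‖ ^ (-(1 / 2 : ℝ))) := by
  have hq_abs : IntegrableOn (fun x => |q x|) (Ioi 0) := by
    refine hq.mono' hq_meas.abs.aestronglyMeasurable ?_
    filter_upwards [ae_restrict_mem measurableSet_Ioi] with x hx
    rw [Real.norm_eq_abs, abs_abs]
    exact le_mul_of_one_le_left (abs_nonneg _) (by linarith [mem_Ioi.1 hx])
  refine IsBigO.of_bound (|lam₁| + 4 * (∫ t in Ioi 0, |q t|) ^ 2) ?_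
  rw [eventually_inf_principal]
  filter_upwards [preimage_mem_comap (Ioi_mem_atTop (2 * |lam₁| + 16 * (∫ t in Ioi 0, |q t|) ^ 2))]
    with z hzc (hz : 0 ≤ z.im)
  have hrpow : ‖‖z‖ ^ (-(1 / 2 : ℝ))‖ = 1 / √‖z‖ := by
    rw [Real.norm_of_nonneg (by positivity), Real.rpow_neg (norm_nonneg _), ← Real.sqrt_eq_rpow,
      one_div]
  rw [hrpow, ← div_eq_mul_one_div]
  refine hf.norm_jostDeriv_shift_remainder_le hq_meas hq_abs (fun w hw hw₀ => ?_) hz hzc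
  simp [hg w hw hw₀ 0 le_rfl, cos_neg]

theorem statement19 (q : ℝ → ℝ) (hq_meas : Measurable q)
    (hq : IntegrableOn (fun x => (1 + x) * |q x|) (Set.Ioi 0))
    (lam₁ : ℝ) (hlam₁ : 0 < lam₁) (f g : ℂ → ℝ → ℂ) (hf : IsJost q f)
    (hg : ∀ z : ℂ, 0 ≤ z.im → z ≠ 0 → ∀ x : ℝ, 0 ≤ x →
      g z x = Complex.I * z ^ (1 / 2 : ℂ) * Complex.exp (Complex.I * z ^ (1 / 2 : ℂ) * x)
        - ∫ t in Set.Ioi x,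
            Complex.cos (z ^ (1 / 2 : ℂ) * ((x : ℂ) - (t : ℂ))) * (q t : ℂ) * f z t) :
    (fun z : ℂ => g (z - (lam₁ : ℂ)) 0 - Complex.I * z ^ (1 / 2 : ℂ)
        + (1 / 2 : ℂ)
          * ∫ x in Set.Ioi (0 : ℝ),
              (Complex.exp (2 * Complex.I * (z - (lam₁ : ℂ)) ^ (1 / 2 : ℂ) * x) + 1) * (q x : ℂ))
      =O[comap (fun z : ℂ => ‖z‖) atTop ⊓ 𝓟 {z : ℂ | 0 ≤ z.im}]
      (fun z : ℂ => ‖z‖ ^ (-(1 / 2 : ℝ))) :=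
  statement19_general q hq_meas hq lam₁ f g hf hg
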